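/- Under the setup, suppose D₁ ≥ D₀ almost surely, for all d, z ∈ {0,1} the pair (Z, W) is conditionally independent of Y_{d,z} given (D₁, D₀), Z is conditionally independent of (D₁, D₀) given W, P(Z = z, W = 1) > 0 for z ∈ {0,1}, P(AT) > 0, P(CP) > 0, P(CP | W = 1) > 0, and E[Y_{1,1} − Y_{1,0} | AT] = ρ₁. Then E[Y_{1,1} | CP] = (r₁(1) − ρ₁·P(AT | W = 1)) / P(CP | W = 1), where r₁(1) = E[Y·D | Z = 1, W = 1] − E[Y·D | Z = 0, W = 1]. -/

import Mathlib

/-!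
On the cell `{Z = z, W = 1}` the product `Y · D` is `Y_{1,z}` restricted to the strata with
`D_z = 1`: always takers and compliers for `z = 1`, always takers and defiers for `z = 0`, and
monotonicity makes the defiers null. Within a stratum `G`, independence of `(Z, W)` and `Y_{1,z}`
factors `E[Y_{1,z} 1_G | Z = z, W = 1]` as `E[Y_{1,z} | G] · P(G | Z = z, W = 1)`, and
independence of `Z` and the stratum given `W` turns the last factor into `P(G | W = 1)`. Hence
`r₁(1) = ρ₁ P(AT | W = 1) + E[Y_{1,1} | CP] P(CP | W = 1)`.
-/

open MeasureTheory ProbabilityTheory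

/-- `pr μ A` is the probability of the event `A`, as a real number. -/
noncomputable def pr {Ω : Type*} [MeasurableSpace Ω] (μ : Measure Ω) (A : Set Ω) : ℝ :=
  (μ A).toReal

/-- `prCond μ A B` is the conditional probability `P(A | B) = P(A ∩ B) / P(B)`. -/
noncomputable def prCond {Ω : Type*} [MeasurableSpace Ω] (μ : Measure Ω) (A B : Set Ω) : ℝ :=
  pr μ (A ∩ B) / pr μ B

/-- `cexp μ A f` is the conditional expectation `E[f | A]` of `f` given the event `A`. -/
noncomputable def cexp {Ω : Type*} [MeasurableSpace Ω] (μ : Measure Ω) (A : Set Ω)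
    (f : Ω → ℝ) : ℝ :=
  ∫ ω, f ω ∂(μ[|A])

/-- The event `{ω | f ω = c}`. -/
def evEq {Ω : Type*} (f : Ω → ℝ) (c : ℝ) : Set Ω := {ω | f ω = c}

/-- Always takers: `D₁ = D₀ = 1`. -/
def ATset {Ω : Type*} (D1 D0 : Ω → ℝ) : Set Ω := {ω | D1 ω = 1 ∧ D0 ω = 1}

/-- Never takers: `D₁ = D₀ = 0`. -/
def NTset {Ω : Type*} (D1 D0 : Ω → ℝ) : Set Ω := {ω | D1 ω = 0 ∧ D0 ω = 0}

/-- Compliers: `D₁ = 1`, `D₀ = 0`. -/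
def CPset {Ω : Type*} (D1 D0 : Ω → ℝ) : Set Ω := {ω | D1 ω = 1 ∧ D0 ω = 0}

def DFset {Ω : Type*} (D1 D0 : Ω → ℝ) : Set Ω := {ω | D1 ω = 0 ∧ D0 ω = 1}

section ConditionalMoments

variable {Ω : Type*} [MeasurableSpace Ω] {μ : Measure Ω}

lemma cexp_eq_inv_mul_setIntegral (A : Set Ω) (f : Ω → ℝ) :
    cexp μ A f = (pr μ A)⁻¹ * ∫ ω in A, f ω ∂μ := by
  simp [cexp, pr, ProbabilityTheory.cond, integral_smul_measure]

lemma cexp_congr {A : Set Ω} (hA : MeasurableSet A) {f g : Ω → ℝ} (hfg : Set.EqOn f g A) :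
    cexp μ A f = cexp μ A g := by
  rw [cexp_eq_inv_mul_setIntegral, cexp_eq_inv_mul_setIntegral, setIntegral_congr_fun hA hfg]

lemma cexp_add {A : Set Ω} {f g : Ω → ℝ} (hf : Integrable f μ) (hg : Integrable g μ) :
    cexp μ A (f + g) = cexp μ A f + cexp μ A g := by
  simp only [cexp_eq_inv_mul_setIntegral, Pi.add_apply,
    integral_add hf.integrableOn hg.integrableOn, mul_add]

lemma cexp_sub {A : Set Ω} {f g : Ω → ℝ} (hf : Integrable f μ) (hg : Integrable g μ) :
    cexp μ A (fun ω => f ω - g ω) = cexp μ A f - cexp μ A g := by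
  simp only [cexp_eq_inv_mul_setIntegral, integral_sub hf.integrableOn hg.integrableOn, mul_sub]

lemma prCond_eq_zero_of_measure_eq_zero {A : Set Ω} (hA : μ A = 0) (B : Set Ω) :
    prCond μ A B = 0 := by
  simp [prCond, pr, measure_mono_null Set.inter_subset_left hA]

variable [IsFiniteMeasure μ]

lemma setIntegral_preimage_inter_eq_cexp_mul_pr {β : Type*} [MeasurableSpace β] {X : Ω → β}
    {T : Set β} {G : Set Ω} {f : Ω → ℝ} (hX : Measurable X) (hT : MeasurableSet T)
    (hG : MeasurableSet G) (hf : Integrable f μ) (hXf : IndepFun X f (μ[|G])) :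
    ∫ ω in X ⁻¹' T ∩ G, f ω ∂μ = cexp μ G f * pr μ (X ⁻¹' T ∩ G) := by
  by_cases hG0 : μ G = 0
  · have hnull : μ (X ⁻¹' T ∩ G) = 0 := measure_mono_null Set.inter_subset_right hG0
    simp [Measure.restrict_eq_zero.mpr hnull, pr, hnull]
  have hpr : pr μ G ≠ 0 := ENNReal.toReal_ne_zero.mpr ⟨hG0, measure_ne_top μ G⟩
  have hind : (X ⁻¹' T).indicator f = (X ⁻¹' T).indicator 1 * f := by
    ext ω; by_cases h : ω ∈ X ⁻¹' T <;> simp [h]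
  have hXf' : IndepFun ((X ⁻¹' T).indicator (1 : Ω → ℝ)) f (μ[|G]) :=
    hXf.comp (measurable_one.indicator hT) measurable_id
  have hprod :
      ∫ ω, (X ⁻¹' T).indicator f ω ∂(μ[|G]) = (μ[|G]).real (X ⁻¹' T) * cexp μ G f := by
    rw [hind, hXf'.integral_mul_eq_mul_integral
      (measurable_one.indicator (hX hT)).aestronglyMeasurable
      (hf.restrict.smul_measure (ENNReal.inv_ne_top.mpr hG0)).aestronglyMeasurable,
      integral_indicator_one (hX hT), cexp]
  calc ∫ ω in X ⁻¹' T ∩ G, f ω ∂μ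
      = pr μ G * cexp μ G ((X ⁻¹' T).indicator f) := by
        rw [cexp_eq_inv_mul_setIntegral, setIntegral_indicator (hX hT), Set.inter_comm,
          mul_inv_cancel_left₀ hpr]
    _ = cexp μ G f * pr μ (X ⁻¹' T ∩ G) := by
        rw [cexp, hprod, measureReal_def, cond_apply hG, ENNReal.toReal_mul, ENNReal.toReal_inv,
          Set.inter_comm]
        simp only [pr] at hpr ⊢
        field_simp

lemma pr_preimage_inter_inter_preimage_eq_mul_prCond {α β : Type*} [MeasurableSpace α]
    [MeasurableSpace β] {X : Ω → α} {V : Ω → β} {A : Set α} {B : Set β} {C : Set Ω}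
    (hA : MeasurableSet A) (hB : MeasurableSet B) (hC : MeasurableSet C)
    (hXV : IndepFun X V (μ[|C])) :
    pr μ (X ⁻¹' A ∩ C ∩ V ⁻¹' B)
      = pr μ (X ⁻¹' A ∩ C) * prCond μ (V ⁻¹' B) C := by
  by_cases hC0 : μ C = 0
  · simp [pr, measure_mono_null (Set.inter_subset_left.trans Set.inter_subset_right) hC0,
      measure_mono_null Set.inter_subset_right hC0]
  have hpr : pr μ C ≠ 0 := ENNReal.toReal_ne_zero.mpr ⟨hC0, measure_ne_top μ C⟩
  have h := congrArg ENNReal.toReal (hXV.measure_inter_preimage_eq_mul A B hA hB)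
  simp only [cond_apply hC, ENNReal.toReal_mul, ENNReal.toReal_inv] at h
  rw [Set.inter_left_comm, ← Set.inter_assoc, Set.inter_comm C (X ⁻¹' A),
    Set.inter_comm C (V ⁻¹' B)] at h
  simp only [prCond, pr] at hpr ⊢
  field_simp at h ⊢
  exact h

end ConditionalMoments

section PrincipalStrata

variable {Ω : Type*} {D1 D0 Z : Ω → ℝ}

section Pointwise

variable {Y : Fin 2 → Fin 2 → Ω → ℝ} {D Yo : Ω → ℝ}

lemma observed_mul_treatment_eqOn_instrument_one (hD1v : ∀ ω, D1 ω = 0 ∨ D1 ω = 1)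
    (hD0v : ∀ ω, D0 ω = 0 ∨ D0 ω = 1) (hD : ∀ ω, D ω = D1 ω * Z ω + D0 ω * (1 - Z ω))
    (hYo : ∀ ω, Yo ω = (Y 1 1 ω * Z ω + Y 1 0 ω * (1 - Z ω)) * D ω
      + (Y 0 1 ω * Z ω + Y 0 0 ω * (1 - Z ω)) * (1 - D ω)) :
    Set.EqOn (fun ω => Yo ω * D ω)
      ((ATset D1 D0).indicator (Y 1 1) + (CPset D1 D0).indicator (Y 1 1)) (evEq Z 1) := by
  intro ω (hz : Z ω = 1)
  rcases hD1v ω with h1 | h1 <;> rcases hD0v ω with h0 | h0 <;>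
    simp [hYo ω, hD ω, ATset, CPset, hz, h1, h0]

lemma observed_mul_treatment_eqOn_instrument_zero (hD1v : ∀ ω, D1 ω = 0 ∨ D1 ω = 1)
    (hD0v : ∀ ω, D0 ω = 0 ∨ D0 ω = 1) (hD : ∀ ω, D ω = D1 ω * Z ω + D0 ω * (1 - Z ω))
    (hYo : ∀ ω, Yo ω = (Y 1 1 ω * Z ω + Y 1 0 ω * (1 - Z ω)) * D ω
      + (Y 0 1 ω * Z ω + Y 0 0 ω * (1 - Z ω)) * (1 - D ω)) :
    Set.EqOn (fun ω => Yo ω * D ω)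
      ((ATset D1 D0).indicator (Y 1 0) + (DFset D1 D0).indicator (Y 1 0)) (evEq Z 0) := by
  intro ω (hz : Z ω = 0)
  rcases hD1v ω with h1 | h1 <;> rcases hD0v ω with h0 | h0 <;>
    simp [hYo ω, hD ω, ATset, DFset, hz, h1, h0]

end Pointwise

variable [MeasurableSpace Ω] {μ : Measure Ω} {W : Ω → ℝ}

lemma measurableSet_stratum (hD1m : Measurable D1) (hD0m : Measurable D0) {G : Set Ω} {i j : ℝ}
    (hG : G = {ω | D1 ω = i ∧ D0 ω = j}) : MeasurableSet G :=
  hG ▸ (hD1m (measurableSet_singleton i)).inter (hD0m (measurableSet_singleton j))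

lemma measure_defiers_eq_zero (hmono : ∀ᵐ ω ∂μ, D0 ω ≤ D1 ω) : μ (DFset D1 D0) = 0 :=
  measure_mono_null (fun ω ⟨h1, h0⟩ => by simp [h1, h0]) (ae_iff.mp hmono)

lemma cexp_cell_indicator_stratum [IsFiniteMeasure μ] (hD1m : Measurable D1)
    (hD0m : Measurable D0) (hZm : Measurable Z) (hWm : Measurable W) {f : Ω → ℝ}
    (hf : Integrable f μ) {z w i j : ℝ} {G : Set Ω} (hG_eq : G = {ω | D1 ω = i ∧ D0 ω = j})
    (hCIf : IndepFun (fun ω => (Z ω, W ω)) f (μ[|G]))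
    (hCIZ : IndepFun Z (fun ω => (D1 ω, D0 ω)) (μ[|evEq W w]))
    (hcell : pr μ (evEq Z z ∩ evEq W w) ≠ 0) :
    cexp μ (evEq Z z ∩ evEq W w) (G.indicator f) = cexp μ G f * prCond μ G (evEq W w) := by
  have hG := measurableSet_stratum hD1m hD0m hG_eq
  subst hG_eq
  have hcell_eq : evEq Z z ∩ evEq W w = (fun ω => (Z ω, W ω)) ⁻¹' {(z, w)} := by
    ext ω; simp [evEq]
  have hstratum_eq :
      {ω | D1 ω = i ∧ D0 ω = j} = (fun ω => (D1 ω, D0 ω)) ⁻¹' {(i, j)} := by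
    ext ω; simp
  have hfactor : pr μ (evEq Z z ∩ evEq W w ∩ {ω | D1 ω = i ∧ D0 ω = j})
      = pr μ (evEq Z z ∩ evEq W w) * prCond μ {ω | D1 ω = i ∧ D0 ω = j} (evEq W w) := by
    rw [hstratum_eq]
    exact pr_preimage_inter_inter_preimage_eq_mul_prCond (measurableSet_singleton z)
      (measurableSet_singleton _) (hWm (measurableSet_singleton w)) hCIZ
  rw [cexp_eq_inv_mul_setIntegral, setIntegral_indicator hG, hcell_eq,
    setIntegral_preimage_inter_eq_cexp_mul_pr (hZm.prodMk hWm) (measurableSet_singleton _) hG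
      hf hCIf, ← hcell_eq, hfactor]
  field_simp

end PrincipalStrata

theorem EY11_CP_identified_general
    {Ω : Type*} [MeasurableSpace Ω] (μ : Measure Ω) [IsProbabilityMeasure μ]
    (Y : Fin 2 → Fin 2 → Ω → ℝ) (D1 D0 Z W : Ω → ℝ)
    (hYint : ∀ d z, Integrable (Y d z) μ)
    (hD1v : ∀ ω, D1 ω = 0 ∨ D1 ω = 1) (hD0v : ∀ ω, D0 ω = 0 ∨ D0 ω = 1)
    (hD1m : Measurable D1) (hD0m : Measurable D0) (hZm : Measurable Z) (hWm : Measurable W)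
    (D : Ω → ℝ) (hD : ∀ ω, D ω = D1 ω * Z ω + D0 ω * (1 - Z ω))
    (Yo : Ω → ℝ)
    (hYo : ∀ ω, Yo ω = (Y 1 1 ω * Z ω + Y 1 0 ω * (1 - Z ω)) * D ω
      + (Y 0 1 ω * Z ω + Y 0 0 ω * (1 - Z ω)) * (1 - D ω))
    (hmono : ∀ᵐ ω ∂μ, D0 ω ≤ D1 ω)
    (hCI1 : ∀ (d z : Fin 2) (i j : ℝ),
      IndepFun (fun ω => (Z ω, W ω)) (Y d z) (μ[|{ω | D1 ω = i ∧ D0 ω = j}]))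
    (hCI2 : ∀ w' : ℝ, IndepFun Z (fun ω => (D1 ω, D0 ω)) (μ[|evEq W w']))
    (hpos : ∀ z : ℝ, z = 0 ∨ z = 1 → 0 < pr μ (evEq Z z ∩ evEq W 1))
    (hCPW : 0 < prCond μ (CPset D1 D0) (evEq W 1))
    (ρ1 : ℝ) (hρ1 : cexp μ (ATset D1 D0) (fun ω => Y 1 1 ω - Y 1 0 ω) = ρ1)
    (r11 : ℝ)
    (hr11 : r11 = cexp μ (evEq Z 1 ∩ evEq W 1) (fun ω => Yo ω * D ω)
      - cexp μ (evEq Z 0 ∩ evEq W 1) (fun ω => Yo ω * D ω)) :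
    cexp μ (CPset D1 D0) (fun ω => Y 1 1 ω)
      = (r11 - ρ1 * prCond μ (ATset D1 D0) (evEq W 1))
        / prCond μ (CPset D1 D0) (evEq W 1) := by
  have hAT : MeasurableSet (ATset D1 D0) := measurableSet_stratum hD1m hD0m rfl
  have hCP : MeasurableSet (CPset D1 D0) := measurableSet_stratum hD1m hD0m rfl
  have hDF : MeasurableSet (DFset D1 D0) := measurableSet_stratum hD1m hD0m rfl
  have hcell : ∀ z : ℝ, MeasurableSet (evEq Z z ∩ evEq W 1) := fun z =>
    (hZm (measurableSet_singleton z)).inter (hWm (measurableSet_singleton 1))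
  have hstratum : ∀ (G : Set Ω) {i j z : ℝ} (z' : Fin 2),
      G = {ω | D1 ω = i ∧ D0 ω = j} → 0 < pr μ (evEq Z z ∩ evEq W 1) →
      cexp μ (evEq Z z ∩ evEq W 1) (G.indicator (Y 1 z'))
        = cexp μ G (Y 1 z') * prCond μ G (evEq W 1) := fun G _ _ _ z' hG hz =>
    cexp_cell_indicator_stratum hD1m hD0m hZm hWm (hYint 1 z') hG (hG ▸ hCI1 1 z' _ _) (hCI2 1)
      hz.ne'
  have hZ1 : cexp μ (evEq Z 1 ∩ evEq W 1) (fun ω => Yo ω * D ω)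
      = cexp μ (ATset D1 D0) (Y 1 1) * prCond μ (ATset D1 D0) (evEq W 1)
        + cexp μ (CPset D1 D0) (Y 1 1) * prCond μ (CPset D1 D0) (evEq W 1) := by
    rw [cexp_congr (hcell 1) ((observed_mul_treatment_eqOn_instrument_one hD1v hD0v hD hYo).mono
        Set.inter_subset_left), cexp_add ((hYint 1 1).indicator hAT) ((hYint 1 1).indicator hCP),
      hstratum (ATset D1 D0) 1 rfl (hpos 1 (by norm_num)),
      hstratum (CPset D1 D0) 1 rfl (hpos 1 (by norm_num))]
  have hZ0 : cexp μ (evEq Z 0 ∩ evEq W 1) (fun ω => Yo ω * D ω)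
      = cexp μ (ATset D1 D0) (Y 1 0) * prCond μ (ATset D1 D0) (evEq W 1) := by
    rw [cexp_congr (hcell 0) ((observed_mul_treatment_eqOn_instrument_zero hD1v hD0v hD hYo).mono
        Set.inter_subset_left), cexp_add ((hYint 1 0).indicator hAT) ((hYint 1 0).indicator hDF),
      hstratum (ATset D1 D0) 0 rfl (hpos 0 (by norm_num)),
      hstratum (DFset D1 D0) 0 rfl (hpos 0 (by norm_num)),
      prCond_eq_zero_of_measure_eq_zero (measure_defiers_eq_zero hmono), mul_zero, add_zero]
  have hρ : cexp μ (ATset D1 D0) (Y 1 1) - cexp μ (ATset D1 D0) (Y 1 0) = ρ1 := by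
    rw [← hρ1, cexp_sub (hYint 1 1) (hYint 1 0)]
  rw [eq_div_iff hCPW.ne', hr11, hZ1, hZ0, ← hρ]
  ring

/-- identification of `E[Y₁₁ | CP]`. -/
theorem EY11_CP_identified
    {Ω : Type*} [MeasurableSpace Ω] (μ : Measure Ω) [IsProbabilityMeasure μ]
    (Y : Fin 2 → Fin 2 → Ω → ℝ) (D1 D0 Z W : Ω → ℝ)
    (hYint : ∀ d z, Integrable (Y d z) μ) (hYmeas : ∀ d z, Measurable (Y d z))
    (hD1v : ∀ ω, D1 ω = 0 ∨ D1 ω = 1) (hD0v : ∀ ω, D0 ω = 0 ∨ D0 ω = 1)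
    (hZv : ∀ ω, Z ω = 0 ∨ Z ω = 1) (hWv : ∀ ω, W ω = 0 ∨ W ω = 1)
    (hD1m : Measurable D1) (hD0m : Measurable D0) (hZm : Measurable Z) (hWm : Measurable W)
    (D : Ω → ℝ) (hD : ∀ ω, D ω = D1 ω * Z ω + D0 ω * (1 - Z ω))
    (Yo : Ω → ℝ)
    (hYo : ∀ ω, Yo ω = (Y 1 1 ω * Z ω + Y 1 0 ω * (1 - Z ω)) * D ω
      + (Y 0 1 ω * Z ω + Y 0 0 ω * (1 - Z ω)) * (1 - D ω))
    (hmono : ∀ᵐ ω ∂μ, D0 ω ≤ D1 ω)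
    (hCI1 : ∀ (d z : Fin 2) (i j : ℝ),
      IndepFun (fun ω => (Z ω, W ω)) (Y d z) (μ[|{ω | D1 ω = i ∧ D0 ω = j}]))
    (hCI2 : ∀ w' : ℝ, IndepFun Z (fun ω => (D1 ω, D0 ω)) (μ[|evEq W w']))
    (hpos : ∀ z : ℝ, z = 0 ∨ z = 1 → 0 < pr μ (evEq Z z ∩ evEq W 1))
    (hAT : 0 < pr μ (ATset D1 D0)) (hCP : 0 < pr μ (CPset D1 D0))
    (hCPW : 0 < prCond μ (CPset D1 D0) (evEq W 1))
    (ρ1 : ℝ) (hρ1 : cexp μ (ATset D1 D0) (fun ω => Y 1 1 ω - Y 1 0 ω) = ρ1)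
    (r11 : ℝ)
    (hr11 : r11 = cexp μ (evEq Z 1 ∩ evEq W 1) (fun ω => Yo ω * D ω)
      - cexp μ (evEq Z 0 ∩ evEq W 1) (fun ω => Yo ω * D ω)) :
    cexp μ (CPset D1 D0) (fun ω => Y 1 1 ω)
      = (r11 - ρ1 * prCond μ (ATset D1 D0) (evEq W 1))
        / prCond μ (CPset D1 D0) (evEq W 1) :=
  EY11_CP_identified_general μ Y D1 D0 Z W hYint hD1v hD0v hD1m hD0m hZm hWm D hD Yo hYo hmono hCI1
    hCI2 hpos hCPW ρ1 hρ1 r11 hr11
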